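/- arXiv:1712.00404 — 4 statements merged into one kernel-verified Lean document; each statement's English description precedes it below -/
import Mathlib

section
/- Let U_F be an N×|F| complex matrix with orthonormal columns (U_Fᴴ U_F = I). For t = 0,…,T let C_t be an N×N diagonal matrix with {0,1} diagonal entries, let C = blkdiag(C_0,…,C_T) and C^c = I_{N(T+1)} − C. Let Ã be an ((T+1)|F|)×|F| complex matrix and suppose there are real numbers 0 < s_min ≤ s_max such that s_min‖z‖ ≤ ‖Ãz‖ ≤ s_max‖z‖ for all z ∈ ℂ^{|F|}. If the ℓ2 operator norm satisfies ‖C^c (I_{T+1} ⊗ U_F)‖ < s_min² / s_max², then the |F|×|F| matrix Ãᴴ (I_{T+1} ⊗ U_F)ᴴ C (I_{T+1} ⊗ U_F) Ã is positive definite, hence invertible; equivalently, the observability matrix O = C (I_{T+1} ⊗ U_F) Ã has full column rank |F| and the F-bandlimited system is observable over the chosen sampling set. -/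
/-!
The matrix `B = I_{T+1} ⊗ U_F` is an isometry and `‖Ãz‖ ≥ s_min ‖z‖ > 0` for `z ≠ 0`.
If `O z = C B Ã z = 0`, the nonzero vector `w = Ãz` satisfies `B w = (1 - C) B w`, so
`‖w‖ = ‖B w‖ ≤ ‖(1 - C) B‖ ‖w‖ < ‖w‖`, because `‖(1 - C) B‖ < s_min²/s_max² ≤ 1`.
Hence `O` is injective. Since `C` is an orthogonal projection, the Gram matrix in the
statement equals `Oᴴ O`, which is positive definite, and `rank O = rank (Oᴴ O) = |F|`.
-/

open Matrix
open scoped Matrix.Norms.L2Operator Kronecker ComplexOrder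

namespace Matrix

variable {𝕜 : Type*} [RCLike 𝕜] {l m n : Type*}

theorem one_kronecker_conjTranspose_mul_self [Fintype l] [Fintype m] [DecidableEq l]
    [DecidableEq n] {U : Matrix m n 𝕜} (hU : Uᴴ * U = 1) :
    ((1 : Matrix l l 𝕜) ⊗ₖ U)ᴴ * ((1 : Matrix l l 𝕜) ⊗ₖ U) = 1 := by
  rw [conjTranspose_kronecker, ← mul_kronecker_mul, conjTranspose_one, one_mul, hU,
    one_kronecker_one]

theorem norm_mulVec_of_conjTranspose_mul_self_eq_one [Fintype m] [Fintype n] [DecidableEq n]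
    {B : Matrix m n 𝕜} (hB : Bᴴ * B = 1) (x : EuclideanSpace 𝕜 n) :
    ‖(EuclideanSpace.equiv m 𝕜).symm (B *ᵥ x)‖ = ‖x‖ := by
  have h : ‖(EuclideanSpace.equiv m 𝕜).symm (B *ᵥ x)‖ ^ 2 = ‖x‖ ^ 2 := by
    simp only [← @inner_self_eq_norm_sq 𝕜, EuclideanSpace.inner_eq_star_dotProduct,
      PiLp.continuousLinearEquiv_symm_apply]
    rw [star_mulVec, dotProduct_comm, dotProduct_mulVec, vecMul_vecMul, hB, vecMul_one,
      dotProduct_comm]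
  exact (sq_eq_sq₀ (norm_nonneg _) (norm_nonneg _)).1 h

theorem injective_mulVec_of_mul_le_norm_mulVec [Fintype m] [Fintype n] {A : Matrix m n 𝕜}
    {s : ℝ} (hs : 0 < s)
    (hA : ∀ z : EuclideanSpace 𝕜 n,
      s * ‖z‖ ≤ ‖(EuclideanSpace.equiv m 𝕜).symm (A *ᵥ z)‖) :
    Function.Injective A.mulVec := by
  refine (injective_iff_map_eq_zero A.mulVecLin).2 fun v hv => ?_
  have hle := hA (WithLp.toLp 2 v)
  rw [mulVecLin_apply] at hv
  simp only [PiLp.continuousLinearEquiv_symm_apply, hv, WithLp.toLp_zero, norm_zero] at hle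
  simpa using nonpos_of_mul_nonpos_right hle hs

theorem injective_mulVec_mul_of_l2_opNorm_one_sub_mul_lt_one [Fintype m] [Fintype n]
    [DecidableEq m] [DecidableEq n] {C : Matrix m m 𝕜} {B : Matrix m n 𝕜} (hB : Bᴴ * B = 1)
    (hC : ‖(1 - C) * B‖ < 1) : Function.Injective (C * B).mulVec := by
  refine (injective_iff_map_eq_zero (C * B).mulVecLin).2 fun v hv => ?_
  set x := WithLp.toLp 2 v
  have hfix : ((1 - C) * B) *ᵥ v = B *ᵥ v := by
    rw [mulVecLin_apply, ← mulVec_mulVec] at hv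
    rw [← mulVec_mulVec, sub_mulVec, one_mulVec, hv, sub_zero]
  have hle : ‖x‖ ≤ ‖(1 - C) * B‖ * ‖x‖ := by
    have := l2_opNorm_mulVec ((1 - C) * B) x
    rwa [hfix, norm_mulVec_of_conjTranspose_mul_self_eq_one hB] at this
  have : ‖x‖ ≤ 0 := by nlinarith [norm_nonneg x]
  simpa [x] using this

theorem rank_eq_card_of_injective_mulVec {K : Type*} [Field K] [Fintype n] {A : Matrix m n K}
    (hA : Function.Injective A.mulVec) : A.rank = Fintype.card n := by
  rw [rank, LinearMap.finrank_range_of_inj hA, Module.finrank_fintype_fun_eq_card]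

theorem isStarProjection_diagonal_natCast {R : Type*} [CommSemiring R] [StarRing R]
    [Fintype n] [DecidableEq n] {c : n → ℕ} (hc : ∀ i, c i = 0 ∨ c i = 1) :
    IsStarProjection (diagonal fun i => (c i : R)) := by
  refine ⟨?_, ?_⟩
  · rw [IsIdempotentElem, diagonal_mul_diagonal]
    congr 1
    funext i
    rcases hc i with h | h <;> simp [h]
  · simp [IsSelfAdjoint, star_eq_conjTranspose]

theorem conjTranspose_mul_mul_eq_of_isStarProjection {R : Type*} [Semiring R] [StarRing R]
    [Fintype m] {P : Matrix m m R} (hP : IsStarProjection P) (A : Matrix m n R) :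
    Aᴴ * P * A = (P * A)ᴴ * (P * A) := by
  rw [conjTranspose_mul, ← star_eq_conjTranspose P, hP.isSelfAdjoint.star_eq, Matrix.mul_assoc,
    Matrix.mul_assoc, ← Matrix.mul_assoc P, hP.isIdempotentElem.eq]

end Matrix

/-- Sufficient condition for observability of an `F`-bandlimited graph process:
if `‖C^c (I_{T+1} ⊗ U_F)‖ < s_min²/s_max²`, where `C` is the block-diagonal `{0,1}`
graph-time sampling matrix, `C^c = I - C`, and `s_min`, `s_max` bound the singular values
of `Ã`, then the Gram matrix `Ãᴴ (I ⊗ U_F)ᴴ C (I ⊗ U_F) Ã` is positive definite and the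
observability matrix `O = C (I ⊗ U_F) Ã` has full column rank `|F|`. -/
theorem observability_of_l2_opNorm_lt
    {N F T : ℕ} (UF : Matrix (Fin N) (Fin F) ℂ) (hUF : UFᴴ * UF = 1)
    (c : Fin (T + 1) → Fin N → ℕ) (hc : ∀ t n, c t n = 0 ∨ c t n = 1)
    (C : Matrix (Fin (T + 1) × Fin N) (Fin (T + 1) × Fin N) ℂ)
    (hC : C = Matrix.diagonal (fun p => (c p.1 p.2 : ℂ)))
    (Atil : Matrix (Fin (T + 1) × Fin F) (Fin F) ℂ)
    (smin smax : ℝ) (hsmin : 0 < smin) (hsle : smin ≤ smax)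
    (hsv : ∀ z : EuclideanSpace ℂ (Fin F),
      smin * ‖z‖ ≤ ‖(EuclideanSpace.equiv (Fin (T + 1) × Fin F) ℂ).symm (Atil.mulVec z)‖ ∧
      ‖(EuclideanSpace.equiv (Fin (T + 1) × Fin F) ℂ).symm (Atil.mulVec z)‖ ≤ smax * ‖z‖)
    (hnorm : ‖(1 - C) * ((1 : Matrix (Fin (T + 1)) (Fin (T + 1)) ℂ) ⊗ₖ UF)‖
      < smin ^ 2 / smax ^ 2) :
    (Atilᴴ * ((1 : Matrix (Fin (T + 1)) (Fin (T + 1)) ℂ) ⊗ₖ UF)ᴴ * C *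
        ((1 : Matrix (Fin (T + 1)) (Fin (T + 1)) ℂ) ⊗ₖ UF) * Atil).PosDef ∧
      (C * ((1 : Matrix (Fin (T + 1)) (Fin (T + 1)) ℂ) ⊗ₖ UF) * Atil).rank = F := by
  set B := (1 : Matrix (Fin (T + 1)) (Fin (T + 1)) ℂ) ⊗ₖ UF
  have hsmax : 0 < smax := hsmin.trans_le hsle
  have hratio : smin ^ 2 / smax ^ 2 ≤ 1 :=
    (div_le_one (by positivity)).2 (pow_le_pow_left₀ hsmin.le hsle 2)
  have hCB : Function.Injective (C * B).mulVec :=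
    injective_mulVec_mul_of_l2_opNorm_one_sub_mul_lt_one
      (one_kronecker_conjTranspose_mul_self hUF) (hnorm.trans_le hratio)
  have hA : Function.Injective Atil.mulVec :=
    injective_mulVec_of_mul_le_norm_mulVec hsmin fun z => (hsv z).1
  have hO : Function.Injective (C * B * Atil).mulVec := by
    have hcomp : (C * B * Atil).mulVec = (C * B).mulVec ∘ Atil.mulVec :=
      funext fun x => (mulVec_mulVec x (C * B) Atil).symm
    exact hcomp ▸ hCB.comp hA
  have hgram : Atilᴴ * Bᴴ * C * B * Atil = (C * B * Atil)ᴴ * (C * B * Atil) := by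
    have hCproj : IsStarProjection C :=
      hC ▸ isStarProjection_diagonal_natCast fun p : Fin (T + 1) × Fin N => hc p.1 p.2
    simpa only [conjTranspose_mul, Matrix.mul_assoc] using
      conjTranspose_mul_mul_eq_of_isStarProjection hCproj (B * Atil)
  refine ⟨hgram ▸ PosDef.conjTranspose_mul_self _ hO, ?_⟩
  rw [rank_eq_card_of_injective_mulVec hO, Fintype.card_fin]
end

section
/- Let ι be a finite index set, let w : ι → ℝ be weights with w_i ≥ 0 and Σ_i w_i = 1, and let X_i be n×n complex Hermitian positive definite matrices for every i with w_i > 0 (and positive semidefinite otherwise). Then the convex combination Σ_i w_i X_i is positive definite and Re tr[(Σ_i w_i X_i)⁻¹] ≤ Σ_i w_i · Re tr[X_i⁻¹]; i.e., the map X ↦ tr(X⁻¹) is convex on Hermitian positive definite matrices. -/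
/-!
With `Y = S⁻¹` for the convex combination `S = ∑ wᵢ Xᵢ`, positivity of `(Y - Xᵢ⁻¹) Xᵢ (Y - Xᵢ⁻¹)`
gives `tr (2Y - Y Xᵢ Y) ≤ tr Xᵢ⁻¹`. Averaging over `i` with the weights `wᵢ`, the left-hand sides
add up to `2 tr Y - tr (Y S Y) = tr Y`.
-/

open Matrix
open scoped ComplexOrder

namespace Matrix

variable {m 𝕜 : Type*} [RCLike 𝕜]

lemma posDef_sum_smul {ι : Type*} [Fintype ι] {w : ι → ℝ} (hw : ∀ i, 0 ≤ w i)
    {X : ι → Matrix m m 𝕜} (hX : ∀ i, (X i).PosSemidef) {j : ι} (hj : 0 < w j)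
    (hXj : (X j).PosDef) : (∑ i, w i • X i).PosDef := by
  classical
  rw [← Finset.add_sum_erase _ _ (Finset.mem_univ j)]
  exact (hXj.smul hj).add_posSemidef (posSemidef_sum _ fun i _ => (hX i).smul (hw i))

variable [Fintype m]

lemma trace_two_smul_sub_mul_mul_le_trace_inv [DecidableEq m] {A Y : Matrix m m 𝕜}
    (hA : A.PosDef) (hY : Y.IsHermitian) : (2 • Y - Y * A * Y).trace ≤ A⁻¹.trace := by
  have hdet : IsUnit A.det := (isUnit_iff_isUnit_det A).mp hA.isUnit
  have hM : (Y - A⁻¹).IsHermitian := hY.sub hA.inv.isHermitian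
  have hexpand : (Y - A⁻¹) * A * (Y - A⁻¹) = A⁻¹ - (2 • Y - Y * A * Y) := by
    have hYA : Y * A * A⁻¹ = Y := by
      rw [Matrix.mul_assoc, mul_nonsing_inv A hdet, Matrix.mul_one]
    simp only [Matrix.sub_mul, Matrix.mul_sub, hYA, nonsing_inv_mul A hdet, Matrix.one_mul,
      two_nsmul]
    abel
  have hpsd : ((Y - A⁻¹) * A * (Y - A⁻¹)).PosSemidef := by
    simpa only [hM.eq] using hA.posSemidef.conjTranspose_mul_mul_same (Y - A⁻¹)
  simpa [hexpand, trace_sub] using hpsd.trace_nonneg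

lemma trace_inv_sum_smul_le [DecidableEq m] {ι : Type*} [Fintype ι] {w : ι → ℝ}
    (hw : ∀ i, 0 ≤ w i) (hw1 : ∑ i, w i = 1) {X : ι → Matrix m m 𝕜}
    (hX : ∀ i, 0 < w i → (X i).PosDef) (hS : (∑ i, w i • X i).PosDef) :
    (∑ i, w i • X i)⁻¹.trace ≤ ∑ i, w i • (X i)⁻¹.trace := by
  set S := ∑ i, w i • X i
  set Y := S⁻¹
  have hYS : Y * S = 1 := nonsing_inv_mul S ((isUnit_iff_isUnit_det S).mp hS.isUnit)
  have hYXY : ∑ i, w i • (Y * X i * Y).trace = Y.trace := by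
    calc ∑ i, w i • (Y * X i * Y).trace = (Y * S * Y).trace := by
          simp only [S, Matrix.mul_sum, Matrix.sum_mul, trace_sum, Matrix.mul_smul,
            Matrix.smul_mul, trace_smul]
      _ = Y.trace := by rw [hYS, Matrix.one_mul]
  calc Y.trace = ∑ i, w i • (2 • Y - Y * X i * Y).trace := by
        simp only [two_nsmul, trace_sub, trace_add, smul_sub, Finset.sum_sub_distrib, hYXY,
          ← Finset.sum_smul, hw1, one_smul]
        abel
    _ ≤ ∑ i, w i • (X i)⁻¹.trace := Finset.sum_le_sum fun i _ => by
        rcases (hw i).eq_or_lt with h0 | hpos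
        · simp [← h0]
        · exact smul_le_smul_of_nonneg_left
            (trace_two_smul_sub_mul_mul_le_trace_inv (hX i hpos) hS.inv.isHermitian) (hw i)

end Matrix

/-- Convexity of `X ↦ tr(X⁻¹)` on Hermitian positive definite matrices: if `w` are convex
combination weights and each `X i` is positive semidefinite, positive definite whenever
`w i > 0`, then `Σ_i w_i X_i` is positive definite and
`Re tr[(Σ_i w_i X_i)⁻¹] ≤ Σ_i w_i · Re tr[X_i⁻¹]`. -/
theorem trace_inv_convex_combination_le
    {ι : Type} [Fintype ι] {n : ℕ}
    (w : ι → ℝ) (hw : ∀ i, 0 ≤ w i) (hw1 : ∑ i, w i = 1)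
    (X : ι → Matrix (Fin n) (Fin n) ℂ)
    (hXsd : ∀ i, (X i).PosSemidef)
    (hXd : ∀ i, 0 < w i → (X i).PosDef) :
    (∑ i, (w i : ℂ) • X i).PosDef ∧
      ((∑ i, (w i : ℂ) • X i)⁻¹.trace).re ≤ ∑ i, w i * ((X i)⁻¹.trace).re := by
  obtain ⟨j, -, hj⟩ : ∃ j ∈ Finset.univ, (0 : ℝ) < w j :=
    Finset.exists_lt_of_sum_lt (by simp [hw1])
  simp only [Complex.coe_smul]
  have hS := posDef_sum_smul hw hXsd hj (hXd j hj)
  refine ⟨hS, ?_⟩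
  simpa [Complex.re_sum] using Complex.re_le_re (trace_inv_sum_smul_le hw hw1 hXd hS)
end

section
/- Let Ψ be an M×F complex matrix, let ι be a finite set indexing the possible realizations of a random sampling matrix, let w : ι → ℝ with w_i ≥ 0 and Σ_i w_i = 1 be their probabilities, and let each C_i be an M×M diagonal matrix with {0,1} diagonal entries such that Ψᴴ C_i Ψ is positive definite for every i with w_i > 0. Let C̄ = Σ_i w_i C_i be the expected sampling matrix. Then for any σ² > 0 the expected least-squares mean squared error is lower bounded as σ² Σ_i w_i Re tr[(Ψᴴ C_i Ψ)⁻¹] ≥ σ² Re tr[(Ψᴴ C̄ Ψ)⁻¹]. -/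
/-!
On positive definite matrices the map `A ↦ Re tr A⁻¹` is convex: each diagonal entry
`x* A⁻¹ x` of the inverse is the pointwise supremum over `y` of the functions
`A ↦ 2 Re x* y - y* A y`, which are affine in `A`. The information matrix `Ψᴴ C̄ Ψ` of the
expected sampling matrix is the `w`-weighted average of the `Ψᴴ C_i Ψ`, so the bound is
Jensen's inequality for this convex function.
-/

open Matrix
open scoped ComplexOrder

namespace Matrix

theorem trace_eq_sum_star_single_dotProduct_mulVec_single {n R : Type*} [Fintype n]
    [DecidableEq n] [NonAssocSemiring R] [StarRing R] (A : Matrix n n R) :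
    A.trace = ∑ j, star (Pi.single j 1 : n → R) ⬝ᵥ (A *ᵥ Pi.single j 1) := by
  simp [trace]

variable {n 𝕜 : Type*} [RCLike 𝕜]

theorem convex_setOf_posDef : Convex ℝ {A : Matrix n n 𝕜 | A.PosDef} := by
  intro A hA B hB a b ha hb hab
  rcases ha.eq_or_lt with rfl | ha
  · rw [zero_add] at hab
    simpa [hab] using hB
  · exact (PosDef.smul hA ha).add_posSemidef (hB.posSemidef.smul hb)

variable [Fintype n] [DecidableEq n]

theorem PosDef.mulVec_inv_mulVec {A : Matrix n n 𝕜} (hA : A.PosDef) (x : n → 𝕜) :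
    A *ᵥ (A⁻¹ *ᵥ x) = x := by
  rw [mulVec_mulVec, mul_nonsing_inv _ (A.isUnit_iff_isUnit_det.mp hA.isUnit), one_mulVec]

theorem PosDef.two_mul_re_dotProduct_sub_le_re_dotProduct_inv_mulVec {A : Matrix n n 𝕜} (hA : A.PosDef) (x y : n → 𝕜) :
    2 * RCLike.re (star x ⬝ᵥ y) - RCLike.re (star y ⬝ᵥ (A *ᵥ y)) ≤
      RCLike.re (star x ⬝ᵥ (A⁻¹ *ᵥ x)) := by
  set u := A⁻¹ *ᵥ x
  have hAu : A *ᵥ u = x := hA.mulVec_inv_mulVec x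
  have hux : star u ⬝ᵥ (A *ᵥ y) = star (star y ⬝ᵥ x) := by
    rw [← hAu, star_dotProduct, star_mulVec, hA.isHermitian.eq, ← dotProduct_mulVec]
  have hsq : 0 ≤ RCLike.re (star (y - u) ⬝ᵥ (A *ᵥ (y - u))) :=
    hA.posSemidef.re_dotProduct_nonneg _
  rw [star_sub, mulVec_sub, sub_dotProduct, dotProduct_sub, dotProduct_sub, hAu, hux,
    star_dotProduct y x, star_dotProduct u x] at hsq
  simp only [map_sub, RCLike.star_def, RCLike.conj_re] at hsq
  linarith

theorem PosDef.re_dotProduct_inv_mulVec_eq {A : Matrix n n 𝕜} (hA : A.PosDef) (x : n → 𝕜) :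
    RCLike.re (star x ⬝ᵥ (A⁻¹ *ᵥ x)) =
      2 * RCLike.re (star x ⬝ᵥ (A⁻¹ *ᵥ x)) -
        RCLike.re (star (A⁻¹ *ᵥ x) ⬝ᵥ (A *ᵥ (A⁻¹ *ᵥ x))) := by
  rw [hA.mulVec_inv_mulVec, star_dotProduct (A⁻¹ *ᵥ x) x, RCLike.star_def, RCLike.conj_re]
  ring

theorem convexOn_re_dotProduct_inv_mulVec (x : n → 𝕜) :
    ConvexOn ℝ {A : Matrix n n 𝕜 | A.PosDef} fun A => RCLike.re (star x ⬝ᵥ (A⁻¹ *ᵥ x)) := by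
  refine ⟨convex_setOf_posDef, fun A hA B hB a b ha hb hab => ?_⟩
  have hS : (a • A + b • B).PosDef := convex_setOf_posDef hA hB ha hb hab
  set y := (a • A + b • B)⁻¹ *ᵥ x
  calc RCLike.re (star x ⬝ᵥ ((a • A + b • B)⁻¹ *ᵥ x))
      = 2 * RCLike.re (star x ⬝ᵥ y) - RCLike.re (star y ⬝ᵥ ((a • A + b • B) *ᵥ y)) :=
        hS.re_dotProduct_inv_mulVec_eq x
    _ = a * (2 * RCLike.re (star x ⬝ᵥ y) - RCLike.re (star y ⬝ᵥ (A *ᵥ y))) +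
          b * (2 * RCLike.re (star x ⬝ᵥ y) - RCLike.re (star y ⬝ᵥ (B *ᵥ y))) := by
        simp only [add_mulVec, smul_mulVec, dotProduct_add, dotProduct_smul, map_add,
          RCLike.smul_re]
        linear_combination (-2 * RCLike.re (star x ⬝ᵥ y)) * hab
    _ ≤ a * RCLike.re (star x ⬝ᵥ (A⁻¹ *ᵥ x)) + b * RCLike.re (star x ⬝ᵥ (B⁻¹ *ᵥ x)) := by
        gcongr
        · exact hA.two_mul_re_dotProduct_sub_le_re_dotProduct_inv_mulVec x y
        · exact hB.two_mul_re_dotProduct_sub_le_re_dotProduct_inv_mulVec x y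

theorem convexOn_re_trace_inv :
    ConvexOn ℝ {A : Matrix n n 𝕜 | A.PosDef} fun A => RCLike.re A⁻¹.trace := by
  refine ⟨convex_setOf_posDef, fun A hA B hB a b ha hb hab => ?_⟩
  simp only [trace_eq_sum_star_single_dotProduct_mulVec_single, map_sum, smul_eq_mul,
    Finset.mul_sum, ← Finset.sum_add_distrib]
  exact Finset.sum_le_sum fun j _ => (convexOn_re_dotProduct_inv_mulVec _).2 hA hB ha hb hab

end Matrix

theorem expected_mse_lower_bound_random_sampling_general
    {M F : ℕ} {ι : Type} [Fintype ι]
    (Ψ : Matrix (Fin M) (Fin F) ℂ)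
    (w : ι → ℝ) (hw : ∀ i, 0 ≤ w i) (hw1 : ∑ i, w i = 1)
    (C : ι → Matrix (Fin M) (Fin M) ℂ)
    (hpd : ∀ i, 0 < w i → (Ψᴴ * C i * Ψ).PosDef)
    (Cbar : Matrix (Fin M) (Fin M) ℂ) (hCbar : Cbar = ∑ i, (w i : ℂ) • C i)
    (σ2 : ℝ) (hσ2 : 0 < σ2) :
    σ2 * ((Ψᴴ * Cbar * Ψ)⁻¹.trace).re ≤
      σ2 * ∑ i, w i * ((Ψᴴ * C i * Ψ)⁻¹.trace).re := by
  classical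
  -- Realizations of probability zero may have singular `Ψᴴ C_i Ψ`, so Jensen's inequality is
  -- applied on the support of `w`.
  set s := Finset.univ.filter fun i => 0 < w i
  have hsupp : ∀ {E : Type} [AddCommGroup E] [Module ℝ E] (f : ι → E),
      ∑ i ∈ s, w i • f i = ∑ i, w i • f i :=
    fun f => Finset.sum_filter_of_ne fun i _ hi => (hw i).lt_of_ne' (left_ne_zero_of_smul hi)
  have hS : Ψᴴ * Cbar * Ψ = ∑ i ∈ s, w i • (Ψᴴ * C i * Ψ) := by
    simp only [hsupp, hCbar, Matrix.mul_sum, Matrix.sum_mul, Matrix.mul_smul, Matrix.smul_mul,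
      Complex.coe_smul]
  have hs1 : ∑ i ∈ s, w i = 1 := by
    simpa only [smul_eq_mul, mul_one, hw1] using hsupp (E := ℝ) fun _ => 1
  have hJensen : RCLike.re (∑ i ∈ s, w i • (Ψᴴ * C i * Ψ))⁻¹.trace ≤
      ∑ i ∈ s, w i • RCLike.re (Ψᴴ * C i * Ψ)⁻¹.trace :=
    Matrix.convexOn_re_trace_inv.map_sum_le (p := fun i => Ψᴴ * C i * Ψ) (fun i _ => hw i) hs1
      fun i hi => hpd i (Finset.mem_filter.mp hi).2
  rw [← hS, hsupp] at hJensen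
  exact mul_le_mul_of_nonneg_left hJensen hσ2.le

/-- Lower bound on the expected least-squares MSE under random sampling: if the random
sampling matrix takes the `{0,1}` diagonal values `C i` with probabilities `w i`, and
`Ψᴴ C_i Ψ` is positive definite for every realization with positive probability, then the
expected MSE `σ² Σ_i w_i Re tr[(Ψᴴ C_i Ψ)⁻¹]` is lower bounded by
`σ² Re tr[(Ψᴴ C̄ Ψ)⁻¹]`, where `C̄ = Σ_i w_i C_i` is the expected sampling matrix. -/
theorem expected_mse_lower_bound_random_sampling
    {M F : ℕ} {ι : Type} [Fintype ι]
    (Ψ : Matrix (Fin M) (Fin F) ℂ)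
    (w : ι → ℝ) (hw : ∀ i, 0 ≤ w i) (hw1 : ∑ i, w i = 1)
    (c : ι → Fin M → ℕ) (hc : ∀ i m, c i m = 0 ∨ c i m = 1)
    (C : ι → Matrix (Fin M) (Fin M) ℂ)
    (hC : ∀ i, C i = Matrix.diagonal (fun m => (c i m : ℂ)))
    (hpd : ∀ i, 0 < w i → (Ψᴴ * C i * Ψ).PosDef)
    (Cbar : Matrix (Fin M) (Fin M) ℂ) (hCbar : Cbar = ∑ i, (w i : ℂ) • C i)
    (σ2 : ℝ) (hσ2 : 0 < σ2) :
    σ2 * ((Ψᴴ * Cbar * Ψ)⁻¹.trace).re ≤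
      σ2 * ∑ i, w i * ((Ψᴴ * C i * Ψ)⁻¹.trace).re :=
  expected_mse_lower_bound_random_sampling_general Ψ w hw hw1 C hpd Cbar hCbar σ2 hσ2
end

section
/- Let U_F be an N×|F| complex matrix with orthonormal columns (U_Fᴴ U_F = I), let C_S be an N×N diagonal matrix with {0,1} diagonal entries, and let C_{S^c} = I − C_S. If the ℓ2 operator norm satisfies ‖C_{S^c} U_F‖ < 1, then the matrix U_Fᴴ C_S U_F is positive definite (hence invertible); consequently every F-bandlimited signal x = U_F x̃ is uniquely determined by its samples C_S x, i.e., C_S U_F x̃ = 0 implies x̃ = 0. -/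
open Matrix
open scoped Matrix.Norms.L2Operator ComplexOrder

/-! Since `C_S` is an orthogonal projection and `U_Fᴴ U_F = I`, writing `A = C_{S^c} U_F` gives
`U_Fᴴ C_S U_F = I − Aᴴ A`, whose quadratic form is `‖x‖² − ‖A x‖² ≥ (1 − ‖A‖²) ‖x‖²`. It is
therefore positive definite when `‖A‖ < 1`, and a positive definite matrix is invertible. -/

namespace Matrix

variable {𝕜 : Type*} [RCLike 𝕜] {m n : Type*} [Fintype m]

lemma isIdempotentElem_diagonal {α : Type*} [Fintype n] [DecidableEq n]
    [NonUnitalNonAssocSemiring α] {d : n → α} (hd : ∀ i, IsIdempotentElem (d i)) :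
    IsIdempotentElem (diagonal d) := by
  unfold IsIdempotentElem
  rw [diagonal_mul_diagonal]
  exact congrArg diagonal (funext hd)

lemma star_dotProduct_self_eq_norm_sq [Fintype n] (x : n → 𝕜) :
    star x ⬝ᵥ x = ((‖(EuclideanSpace.equiv n 𝕜).symm x‖ ^ 2 : ℝ) : 𝕜) := by
  rw [dotProduct_comm, RCLike.ofReal_pow, ← inner_self_eq_norm_sq_to_K]
  rfl

lemma conjTranspose_mul_mul_eq_one_sub [DecidableEq m] [DecidableEq n] {U : Matrix m n 𝕜}
    (hU : Uᴴ * U = 1) {P : Matrix m m 𝕜} (hP : IsSelfAdjoint P) (hPP : IsIdempotentElem P) :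
    Uᴴ * P * U = 1 - ((1 - P) * U)ᴴ * ((1 - P) * U) := by
  have hQ : (1 - P)ᴴ * (1 - P) = 1 - P := by
    rw [← star_eq_conjTranspose, ((IsSelfAdjoint.one _).sub hP).star_eq]
    exact hPP.one_sub
  rw [conjTranspose_mul, Matrix.mul_assoc Uᴴ (1 - P)ᴴ, ← Matrix.mul_assoc (1 - P)ᴴ, hQ,
    Matrix.sub_mul, Matrix.one_mul, Matrix.mul_sub, hU, Matrix.mul_assoc, sub_sub_cancel]

lemma posDef_one_sub_conjTranspose_mul_self [Fintype n] [DecidableEq n] {A : Matrix m n 𝕜}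
    (hA : ‖A‖ < 1) :
    (1 - Aᴴ * A).PosDef := by
  refine posDef_iff_dotProduct_mulVec.mpr
    ⟨isHermitian_one.sub (isHermitian_conjTranspose_mul_self A), fun x hx => ?_⟩
  set e := EuclideanSpace.equiv n 𝕜
  have hx_pos : 0 < ‖e.symm x‖ := norm_pos_iff.mpr (by simpa using hx)
  have hAx : ‖(EuclideanSpace.equiv m 𝕜).symm (A *ᵥ x)‖ < ‖e.symm x‖ :=
    calc _ ≤ ‖A‖ * ‖e.symm x‖ := l2_opNorm_mulVec A (e.symm x)
      _ < ‖e.symm x‖ := mul_lt_of_lt_one_left hx_pos hA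
  rw [sub_mulVec, one_mulVec, dotProduct_sub, ← mulVec_mulVec, dotProduct_mulVec, ← star_mulVec,
    star_dotProduct_self_eq_norm_sq, star_dotProduct_self_eq_norm_sq, ← RCLike.ofReal_sub,
    RCLike.ofReal_pos, sub_pos]
  exact pow_lt_pow_left₀ hAx (norm_nonneg _) two_ne_zero

end Matrix

/-- Reconstruction of bandlimited graph signals: if `U_F` has orthonormal columns, `C_S` is
the `{0,1}` diagonal projection onto the sampling set and `C_{S^c} = I − C_S`, then
`‖C_{S^c} U_F‖ < 1` implies that `U_Fᴴ C_S U_F` is positive definite (hence invertible) and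
every `F`-bandlimited signal `x = U_F x̃` is uniquely determined by its samples `C_S x`:
`C_S U_F x̃ = 0` implies `x̃ = 0`. -/
theorem bandlimited_recovery_of_l2_opNorm_lt_one
    {N F : ℕ} (UF : Matrix (Fin N) (Fin F) ℂ) (hUF : UFᴴ * UF = 1)
    (c : Fin N → ℕ) (hc : ∀ n, c n = 0 ∨ c n = 1)
    (CS : Matrix (Fin N) (Fin N) ℂ) (hCS : CS = Matrix.diagonal (fun n => (c n : ℂ)))
    (hnorm : ‖(1 - CS) * UF‖ < 1) :
    (UFᴴ * CS * UF).PosDef ∧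
      ∀ xt : Fin F → ℂ, (CS * UF).mulVec xt = 0 → xt = 0 := by
  have hCS_selfAdjoint : IsSelfAdjoint CS :=
    hCS ▸ isHermitian_diagonal_iff.mpr fun n => IsSelfAdjoint.natCast (c n)
  have hCS_idem : IsIdempotentElem CS :=
    hCS ▸ isIdempotentElem_diagonal fun n => by
      rcases hc n with h | h <;> simp [h, IsIdempotentElem]
  have hpos : (UFᴴ * CS * UF).PosDef := by
    rw [conjTranspose_mul_mul_eq_one_sub hUF hCS_selfAdjoint hCS_idem]
    exact posDef_one_sub_conjTranspose_mul_self hnorm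
  refine ⟨hpos, fun xt hxt => mulVec_injective_iff_isUnit.mpr hpos.isUnit ?_⟩
  rw [mulVec_zero, Matrix.mul_assoc, ← mulVec_mulVec, hxt, mulVec_zero]
end
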